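/- Let μ be a compactly supported Borel probability measure on ℝ^d and let Λ be a tight-frame spectrum for μ. Then Λ is translationally bounded: sup_{x∈ℝ^d} #(Λ ∩ B(x,1)) < ∞. -/

import Mathlib

open MeasureTheory Metric Set ENNReal

noncomputable section

/-- Euclidean space ℝ^d. -/
abbrev Euc (d : ℕ) := EuclideanSpace ℝ (Fin d)

/-- The exponential `e^{-2πi l·x}`. -/
noncomputable def fexp {d : ℕ} (l x : Euc d) : ℂ :=
  Complex.exp (-(2 * (Real.pi : ℂ) * Complex.I * ((inner ℝ l x : ℝ) : ℂ)))

/-- `Λ` is a tight-frame spectrum for `μ` with constant `A > 0`: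
for every `f ∈ L²(μ)`, `∑_{λ∈Λ} |∫ f(x) e^{-2πi λ·x} dμ(x)|² = A ∫ |f|² dμ`. -/
def IsTightFrameSpectrum {d : ℕ} (μ : Measure (Euc d)) (Λ : Set (Euc d)) (A : ℝ) : Prop :=
  Λ.Countable ∧ 0 < A ∧
    ∀ f : Euc d → ℂ, MemLp f 2 μ →
      ∑' l : Λ, ‖∫ x, f x * fexp (l : Euc d) x ∂μ‖ ^ 2 = A * ∫ x, ‖f x‖ ^ 2 ∂μ

/-- `μ` is tight-frame spectral: it admits a tight-frame spectrum with some constant `A > 0`. -/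
def TightFrameSpectral {d : ℕ} (μ : Measure (Euc d)) : Prop :=
  ∃ Λ A, IsTightFrameSpectrum μ Λ A

/-- The segment measure `μ_{x₀,v}`: pushforward of Lebesgue measure on `[0,1]`
under `t ↦ x₀ + t • v`. -/
noncomputable def segMeasure (x0 v : Euc 2) : Measure (Euc 2) :=
  Measure.map (fun t : ℝ => x0 + t • v) (volume.restrict (Set.Icc (0:ℝ) 1))

/-- `μ̃`: the pushforward of `μ` under `x ↦ -x`. -/
noncomputable def mneg {d : ℕ} (μ : Measure (Euc d)) : Measure (Euc d) :=
  Measure.map (fun x => -x) μ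

/-- The convolution `μ * ν`: pushforward of `μ × ν` under `(x,y) ↦ x + y`. -/
noncomputable def mconv {d : ℕ} (μ ν : Measure (Euc d)) : Measure (Euc d) :=
  Measure.map (fun p : Euc d × Euc d => p.1 + p.2) (μ.prod ν)

/-- The Fourier transform `f̂(ξ) = ∫ f(x) e^{-2πi ξ·x} dx`. -/
noncomputable def ftFun {d : ℕ} (f : Euc d → ℂ) (ξ : Euc d) : ℂ :=
  ∫ x, f x * fexp ξ x

/-! Testing the frame identity on `x ↦ e^{2πi ξ·x}` gives `∑_{λ∈Λ} |μ̂(λ - ξ)|² = A` for every `ξ`.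
Since `μ̂` is continuous with `μ̂(0) = 1`, we have `|μ̂|² ≥ 1/2` on some ball `B(0, δ)`, so every ball
of radius `δ` contains at most `2A` points of `Λ`, and a unit ball is covered by finitely many
balls of radius `δ`. -/

lemma norm_fexp {d : ℕ} (l x : Euc d) : ‖fexp l x‖ = 1 := by
  simp [fexp, Complex.norm_exp]

lemma fexp_neg_mul {d : ℕ} (ξ l x : Euc d) : fexp (-ξ) x * fexp l x = fexp (l - ξ) x := by
  simp only [fexp, ← Complex.exp_add, inner_sub_left, inner_neg_left]
  push_cast
  ring_nf

lemma fexp_eq_exp_inner {d : ℕ} (l x : Euc d) :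
    fexp l x = Complex.exp (inner ℝ x (-(2 * Real.pi) • l) * Complex.I) := by
  simp only [fexp, inner_smul_right, real_inner_comm l x]
  push_cast
  ring_nf

lemma memLp_fexp {d : ℕ} (μ : Measure (Euc d)) [IsFiniteMeasure μ] (l : Euc d) :
    MemLp (fexp l) 2 μ := by
  refine MemLp.of_bound ?_ 1 (.of_forall fun x => (norm_fexp l x).le)
  simp only [funext (fexp_eq_exp_inner l)]
  fun_prop

lemma integral_fexp_eq_charFun {d : ℕ} (μ : Measure (Euc d)) (l : Euc d) :
    ∫ x, fexp l x ∂μ = charFun μ (-(2 * Real.pi) • l) := by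
  simp only [fexp_eq_exp_inner, charFun_apply]

lemma exists_pos_le_norm_integral_fexp_sq_of_norm_lt {d : ℕ} (μ : Measure (Euc d))
    [IsProbabilityMeasure μ] {c : ℝ} (hc : c < 1) :
    ∃ δ > 0, ∀ w : Euc d, ‖w‖ < δ → c ≤ ‖∫ x, fexp w x ∂μ‖ ^ 2 := by
  have hcont : Continuous fun w : Euc d => ‖∫ x, fexp w x ∂μ‖ ^ 2 := by
    simp only [integral_fexp_eq_charFun]
    fun_prop
  have hzero : ‖∫ x, fexp (0 : Euc d) x ∂μ‖ ^ 2 = 1 := by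
    simp [integral_fexp_eq_charFun, charFun_zero]
  obtain ⟨δ, hδ, hball⟩ := Metric.eventually_nhds_iff.mp
    (hcont.continuousAt.eventually (lt_mem_nhds (hzero ▸ hc) : ∀ᶠ y in nhds _, c < y))
  exact ⟨δ, hδ, fun w hw => (hball (by simpa using hw)).le⟩

lemma Summable.encard_setOf_le_le {ι : Type*} {f : ι → ℝ} (hf : Summable f)
    (hf0 : ∀ i, 0 ≤ f i) {c : ℝ} (hc : 0 < c) :
    {i | c ≤ f i}.encard ≤ ⌈(∑' i, f i) / c⌉₊ := by
  have hfin : {i | c ≤ f i}.Finite := by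
    simpa [Filter.eventually_cofinite] using hf.tendsto_cofinite_zero.eventually_lt_const hc
  have hcard : hfin.toFinset.card * c ≤ ∑' i, f i :=
    calc hfin.toFinset.card * c ≤ ∑ i ∈ hfin.toFinset, f i := by
          simpa using hfin.toFinset.card_nsmul_le_sum f c (by simp)
      _ ≤ ∑' i, f i := hf.sum_le_tsum _ fun i _ => hf0 i
  rw [hfin.encard_eq_coe_toFinset_card, Nat.cast_le, ← Nat.cast_le (α := ℝ)]
  exact (le_div_iff₀ hc).mpr hcard |>.trans (Nat.le_ceil _)

lemma IsTightFrameSpectrum.tsum_norm_integral_fexp_sub_sq {d : ℕ} {μ : Measure (Euc d)}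
    [IsProbabilityMeasure μ] {Λ : Set (Euc d)} {A : ℝ} (hΛ : IsTightFrameSpectrum μ Λ A)
    (ξ : Euc d) : ∑' l : Λ, ‖∫ x, fexp ((l : Euc d) - ξ) x ∂μ‖ ^ 2 = A := by
  simpa [fexp_neg_mul, norm_fexp] using hΛ.2.2 (fexp (-ξ)) (memLp_fexp μ (-ξ))

lemma IsTightFrameSpectrum.encard_inter_ball_le {d : ℕ} {μ : Measure (Euc d)}
    [IsProbabilityMeasure μ] {Λ : Set (Euc d)} {A : ℝ} (hΛ : IsTightFrameSpectrum μ Λ A)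
    {δ c : ℝ} (hc : 0 < c) (hlow : ∀ w : Euc d, ‖w‖ < δ → c ≤ ‖∫ x, fexp w x ∂μ‖ ^ 2)
    (ξ : Euc d) : (Λ ∩ ball ξ δ).encard ≤ ⌈A / c⌉₊ := by
  set g : Λ → ℝ := fun l => ‖∫ x, fexp ((l : Euc d) - ξ) x ∂μ‖ ^ 2
  have hsum : ∑' l, g l = A := hΛ.tsum_norm_integral_fexp_sub_sq ξ
  have hg : Summable g := by
    by_contra h
    exact hΛ.2.1.ne' (hsum ▸ tsum_eq_zero_of_not_summable h)
  have hsub : ((↑) ⁻¹' ball ξ δ : Set Λ) ⊆ {l | c ≤ g l} := fun l hl =>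
    hlow _ (by simpa [dist_eq_norm] using hl)
  rw [← Subtype.image_preimage_coe, Subtype.val_injective.encard_image, ← hsum]
  exact (encard_le_encard hsub).trans (hg.encard_setOf_le_le (fun _ => sq_nonneg _) hc)

lemma exists_encard_inter_ball_le_mul {E : Type*} [SeminormedAddCommGroup E] [ProperSpace E]
    {Λ : Set E} {δ : ℝ} (hδ : 0 < δ) {n : ℕ∞} (h : ∀ x, (Λ ∩ ball x δ).encard ≤ n) (r : ℝ) :
    ∃ N : ℕ, ∀ x, (Λ ∩ ball x r).encard ≤ N * n := by
  obtain ⟨t, ht⟩ := (isCompact_closedBall (0 : E) r).elim_finite_subcover (ball · δ)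
    (fun _ => isOpen_ball) fun y _ => mem_iUnion.mpr ⟨y, mem_ball_self hδ⟩
  refine ⟨t.card, fun x => ?_⟩
  have hcover : Λ ∩ ball x r ⊆ ⋃ c ∈ t, Λ ∩ ball (x + c) δ := by
    rintro y ⟨hyΛ, hy⟩
    have : y - x ∈ closedBall (0 : E) r := by
      simpa [dist_eq_norm] using (mem_ball.mp hy).le
    obtain ⟨c, hc, hyc⟩ := mem_iUnion₂.mp (ht this)
    exact mem_iUnion₂.mpr ⟨c, hc, hyΛ, by simpa [dist_eq_norm, sub_sub] using hyc⟩
  calc (Λ ∩ ball x r).encard ≤ ∑ c ∈ t, (Λ ∩ ball (x + c) δ).encard :=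
        (encard_le_encard hcover).trans (t.set_encard_biUnion_le _)
    _ ≤ t.card * n := by simpa using t.sum_le_card_nsmul _ n fun c _ => h (x + c)

theorem tight_frame_spectrum_translationally_bounded_general
    {d : ℕ} (μ : Measure (Euc d)) [IsProbabilityMeasure μ]
    (Λ : Set (Euc d)) (A : ℝ) (hΛ : IsTightFrameSpectrum μ Λ A) :
    (⨆ x : Euc d, ((Λ ∩ Metric.ball x 1).encard : ℕ∞)) < ⊤ := by
  obtain ⟨δ, hδ, hlow⟩ := exists_pos_le_norm_integral_fexp_sq_of_norm_lt μ (c := 1 / 2)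
    (by norm_num)
  obtain ⟨N, hN⟩ := exists_encard_inter_ball_le_mul hδ
    (hΛ.encard_inter_ball_le (by norm_num) hlow) 1
  exact (iSup_le hN).trans_lt (by simpa using ENat.natCast_lt_top (N * ⌈A / (1 / 2)⌉₊))

/-- A tight-frame spectrum of a compactly supported probability measure is
translationally bounded: `sup_x #(Λ ∩ B(x,1)) < ∞`. -/
theorem tight_frame_spectrum_translationally_bounded
    {d : ℕ} (μ : Measure (Euc d)) [IsProbabilityMeasure μ]
    (hcpt : ∃ K : Set (Euc d), IsCompact K ∧ μ Kᶜ = 0)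
    (Λ : Set (Euc d)) (A : ℝ) (hΛ : IsTightFrameSpectrum μ Λ A) :
    (⨆ x : Euc d, ((Λ ∩ Metric.ball x 1).encard : ℕ∞)) < ⊤ :=
  tight_frame_spectrum_translationally_bounded_general μ Λ A hΛ
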